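/- Let n ≡ 0 (mod 4), n ≥ 8, and for k ∈ {1,…,n−1}\{n/2} let α_k = (2k−1)π/(2(n−1)) and ξ_k ∈ ℝ^{n−2} be the eigenvector defined by ξ_k = Σ_{i=0}^{n/4−1} U^{4i} τ_k where τ_k = (2cos((n−3)α_k), …, 2cos α_k, 1)ᵀ and U is the upper shift matrix. Then ∏_{k=1, k≠n/2}^{n−1} eᵀξ_k = ±2^{n/2−1}, where e is the all-ones vector. Moreover eᵀξ_k = sin(((n−1)/2)α_k)·sin((n/2)α_k) / (sin(α_k/2)·sin(2α_k)). -/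

import Mathlib

/-!
Summing the entries of `U^{4i} τ_k` keeps only the last `n - 2 - 4i` entries of `τ_k`, and these
add up to a Dirichlet kernel `1 + 2 ∑_{q ≤ N} cos (q α)`, so multiplied by `sin (α/2)` they give
`sin ((N + 1/2) α)`. The resulting sines form an arithmetic progression of step `4α`; multiplying
their sum by `sin 2α` telescopes to `sin ((n-1)α/2) · sin (nα/2)`.

For the product: `(n-1) α_k` is an odd multiple of `π/2`, so `|2 sin ((n-1)α_k/2)| = √2`.
For `k ≠ n/2` the numbers `2k - 1` run once through the nonzero residues mod `n - 1`, and so do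
their multiples by `n/4`, which is prime to `n - 1`; hence `∏ |sin (nα_k/2)| = ∏ |sin 2α_k|`.
Finally `∏_{k=1}^{n-1} 2 sin ((2k-1)π/(4m)) = √2` for `m = n - 1`: its square is the norm of
`∏_{i<2m} (1 - ζ^{2i+1}) = 2`, `ζ` a primitive `4m`-th root of unity, whose two halves agree by
the symmetry `θ ↦ π - θ`; the factor `k = n/2` alone contributes `√2`. What is left is
`√2 ^ (n-2)`.
-/

open Matrix

/-- The `(n-2) × (n-2)` upper shift matrix. -/
noncomputable def shiftU (n : ℕ) : Matrix (Fin (n - 2)) (Fin (n - 2)) ℝ :=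
  Matrix.of fun i j => if i.val + 1 = j.val then 1 else 0

/-- The angle `α_k = (2k-1)π/(2(n-1))`. -/
noncomputable def alphaAng (n k : ℕ) : ℝ := (2 * (k : ℝ) - 1) * Real.pi / (2 * ((n : ℝ) - 1))

/-- The vector `τ_k = (2cos((n-3)α_k), 2cos((n-4)α_k), …, 2cos α_k, 1)ᵀ`. -/
noncomputable def tauVec (n k : ℕ) : Fin (n - 2) → ℝ :=
  fun j => if j.val = n - 3 then 1 else 2 * Real.cos (((n - 3 - j.val : ℕ) : ℝ) * alphaAng n k)

/-- The vector `ξ_k = Σ_{i=0}^{n/4-1} U^{4i} τ_k`. -/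
noncomputable def xiVec (n k : ℕ) : Fin (n - 2) → ℝ :=
  ∑ i ∈ Finset.range (n / 4), ((shiftU n) ^ (4 * i)) *ᵥ tauVec n k

open Finset Real

lemma shiftU_pow_apply (n p : ℕ) (i j : Fin (n - 2)) :
    (shiftU n ^ p) i j = if i.val + p = j.val then 1 else 0 := by
  induction p generalizing j with
  | zero => simp [Matrix.one_apply, Fin.ext_iff]
  | succ p ih =>
    simp only [pow_succ, Matrix.mul_apply, ih]
    simp only [shiftU, Matrix.of_apply, ite_mul, one_mul, zero_mul]
    rw [Fin.sum_univ_eq_sum_range (fun b => if i.val + p = b then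
      (if b + 1 = j.val then (1 : ℝ) else 0) else 0), sum_ite_eq]
    split_ifs <;> simp only [mem_range] at * <;> omega

lemma sum_shiftU_pow_mulVec (n p : ℕ) (v : Fin (n - 2) → ℝ) :
    ∑ j, (shiftU n ^ p *ᵥ v) j = ∑ j : Fin (n - 2), if p ≤ j.val then v j else 0 := by
  simp only [Matrix.mulVec, dotProduct, shiftU_pow_apply, ite_mul, one_mul, zero_mul]
  rw [sum_comm]
  refine sum_congr rfl fun l _ => ?_
  by_cases hl : p ≤ l.val
  · have hiff (j : ℕ) : (j + p = l.val) = (j = l.val - p) := propext (by omega)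
    rw [Fin.sum_univ_eq_sum_range (fun j => if j + p = l.val then v l else 0)]
    simp only [hiff, sum_ite_eq', mem_range]
    rw [if_pos (by omega), if_pos hl]
  · rw [if_neg hl]
    exact sum_eq_zero fun j _ => if_neg (by omega)

lemma Fin.sum_ite_le_reflect {M : Type*} [AddCommMonoid M] (N p : ℕ) (f : ℕ → M) :
    ∑ j : Fin N, (if p ≤ j.val then f (N - 1 - j) else 0) = ∑ q ∈ range (N - p), f q := by
  have hrange : (range N).filter (· < N - p) = range (N - p) := by ext; simp; omega
  rw [Fin.sum_univ_eq_sum_range (fun j => if p ≤ j then f (N - 1 - j) else 0),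
    ← sum_range_reflect, ← hrange, sum_filter]
  refine sum_congr rfl fun j hj => ?_
  rw [mem_range] at hj
  simp only [show N - 1 - (N - 1 - j) = j by omega, show p ≤ N - 1 - j ↔ j < N - p by omega]

/-- `∑ q ∈ range (N + 1), dirichletCoeff x q` is the Dirichlet kernel
`1 + 2 ∑_{q=1}^N cos (q x)`. -/
noncomputable def dirichletCoeff (x : ℝ) (q : ℕ) : ℝ := if q = 0 then 1 else 2 * cos (q * x)

lemma sin_half_mul_sum_dirichletCoeff (x : ℝ) (N : ℕ) :
    sin (x / 2) * ∑ q ∈ range (N + 1), dirichletCoeff x q = sin ((N + 1 / 2) * x) := by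
  induction N with
  | zero => simp [dirichletCoeff]; ring_nf
  | succ N ih =>
    rw [sum_range_succ, mul_add, ih, dirichletCoeff, if_neg N.succ_ne_zero]
    have := sin_sub_sin ((N + 1 + 1 / 2) * x) ((N + 1 / 2) * x)
    push_cast
    ring_nf at this ⊢
    linarith

lemma sin_mul_sum_sin_sub (d y : ℝ) (M : ℕ) :
    sin d * ∑ i ∈ range M, sin (y - 2 * i * d) = sin (y - (M - 1) * d) * sin (M * d) := by
  set g : ℕ → ℝ := fun i => cos (y - (2 * i - 1) * d)
  have hstep (i : ℕ) : sin d * sin (y - 2 * i * d) = (g (i + 1) - g i) / 2 := by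
    have := two_mul_sin_mul_sin (y - 2 * i * d) d
    simp only [g, Nat.cast_succ]
    rw [show y - (2 * (i + 1) - 1) * d = y - 2 * i * d - d by ring,
      show y - (2 * i - 1) * d = y - 2 * i * d + d by ring]
    linarith
  have hend := two_mul_sin_mul_sin (y - (M - 1) * d) (M * d)
  rw [mul_sum, sum_congr rfl fun i _ => hstep i, ← sum_div, sum_range_sub]
  simp only [g, Nat.cast_zero]
  rw [show y - (2 * M - 1) * d = y - (M - 1) * d - M * d by ring,
    show y - (2 * 0 - 1) * d = y - (M - 1) * d + M * d by ring]
  linarith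

lemma tauVec_apply (n k : ℕ) (j : Fin (n - 2)) :
    tauVec n k j = dirichletCoeff (alphaAng n k) (n - 2 - 1 - j) := by
  have hj := j.isLt
  simp only [tauVec, dirichletCoeff, show n - 2 - 1 - j = n - 3 - j by omega,
    show j.val = n - 3 ↔ n - 3 - j = 0 by omega]

lemma one_dotProduct_xiVec (n k : ℕ) :
    (fun _ => (1 : ℝ)) ⬝ᵥ xiVec n k
      = ∑ i ∈ range (n / 4), ∑ q ∈ range (n - 2 - 4 * i),
          dirichletCoeff (alphaAng n k) q := by
  simp only [dotProduct, one_mul, xiVec, Finset.sum_apply]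
  rw [sum_comm]
  simp only [sum_shiftU_pow_mulVec, tauVec_apply, Fin.sum_ite_le_reflect]

lemma sin_mul_sin_mul_one_dotProduct_xiVec (n k : ℕ) (hn : n % 4 = 0) :
    sin (alphaAng n k / 2) * sin (2 * alphaAng n k) * ((fun _ => (1 : ℝ)) ⬝ᵥ xiVec n k)
      = sin ((n - 1) / 2 * alphaAng n k) * sin (n / 2 * alphaAng n k) := by
  set α := alphaAng n k
  have hinner (i : ℕ) (hi : i ∈ range (n / 4)) :
      sin (α / 2) * ∑ q ∈ range (n - 2 - 4 * i), dirichletCoeff α q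
        = sin ((n - 5 / 2) * α - 2 * i * (2 * α)) := by
    rw [mem_range] at hi
    rw [show n - 2 - 4 * i = (n - 3 - 4 * i) + 1 by omega, sin_half_mul_sum_dirichletCoeff,
      Nat.sub_sub, Nat.cast_sub (by omega)]
    push_cast
    ring_nf
  have hquarter : ((n / 4 : ℕ) : ℝ) = n / 4 := by
    rw [Nat.cast_div_charZero (Nat.dvd_of_mod_eq_zero hn)]; norm_num
  rw [one_dotProduct_xiVec, mul_comm (sin _), mul_assoc, mul_sum, sum_congr rfl hinner,
    sin_mul_sum_sin_sub, hquarter]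
  ring_nf

lemma abs_sin_natCast_mul_pi_div (m N : ℕ) [NeZero m] :
    |sin (N * π / m)| = |sin ((N : ZMod m).val * π / m)| := by
  have hm : (m : ℝ) ≠ 0 := Nat.cast_ne_zero.mpr (NeZero.ne m)
  have hsplit : (N : ℝ) * π / m = (N % m : ℕ) * π / m + (N / m : ℕ) * π := by
    conv_lhs => rw [← Nat.mod_add_div N m]
    push_cast
    field_simp
  rw [ZMod.val_natCast, hsplit, sin_add_nat_mul_pi, abs_mul, abs_pow, abs_neg, abs_one, one_pow,
    one_mul]

lemma sin_natCast_mul_pi_div_ne_zero (m N : ℕ) [NeZero m] (hN : (N : ZMod m) ≠ 0) :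
    sin (N * π / m) ≠ 0 := by
  have hm : (0 : ℝ) < m := Nat.cast_pos.mpr (Nat.pos_of_neZero m)
  have hval : (0 : ℝ) < (N : ZMod m).val :=
    Nat.cast_pos.mpr (Nat.pos_of_ne_zero ((ZMod.val_ne_zero _).mpr hN))
  have hlt : ((N : ZMod m).val : ℝ) < m := Nat.cast_lt.mpr (ZMod.val_lt _)
  rw [← abs_pos, abs_sin_natCast_mul_pi_div, abs_pos]
  refine (sin_pos_of_pos_of_lt_pi (by positivity) ?_).ne'
  rw [div_lt_iff₀ hm]
  nlinarith [pi_pos]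

lemma Units.prod_erase_zero_mul_left {R M : Type*} [MonoidWithZero R] [Fintype R] [DecidableEq R]
    [CommMonoid M] (u : Rˣ) (f : R → M) :
    ∏ x ∈ univ.erase 0, f (u * x) = ∏ x ∈ univ.erase 0, f x :=
  prod_nbij' (u * ·) (↑u⁻¹ * ·) (by simp) (by simp) (by simp) (by simp) fun _ _ => rfl

lemma bijOn_two_mul_sub_one (m : ℕ) [NeZero m] (hm : Odd m) :
    Set.BijOn (fun k : ℕ => ((2 * k - 1 : ℕ) : ZMod m)) ((Icc 1 m).erase ((m + 1) / 2))
      ((univ : Finset (ZMod m)).erase 0) := by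
  set f := fun k : ℕ => ((2 * k - 1 : ℕ) : ZMod m)
  set K := (Icc 1 m).erase ((m + 1) / 2)
  have hK {k : ℕ} (hk : k ∈ (K : Set ℕ)) : 1 ≤ k ∧ k ≤ m ∧ k ≠ (m + 1) / 2 := by
    simp only [K, coe_erase, coe_Icc, Set.mem_sdiff, Set.mem_Icc, Set.mem_singleton_iff] at hk
    omega
  have hmaps : Set.MapsTo f K ((univ : Finset (ZMod m)).erase 0) := by
    intro k hk
    have := hK hk
    simp only [f, coe_erase, coe_univ, Set.mem_sdiff, Set.mem_univ, Set.mem_singleton_iff,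
      true_and, ZMod.natCast_eq_zero_iff]
    intro hdvd
    have := Nat.eq_of_dvd_of_lt_two_mul (by omega) hdvd (by omega)
    omega
  have hinj : Set.InjOn f K := by
    intro k hk k' hk' heq
    wlog hle : k ≤ k' generalizing k k'
    · exact (this hk' hk heq.symm (by omega)).symm
    have := hK hk
    have := hK hk'
    have hdvd := (Nat.modEq_iff_dvd' (by omega)).mp ((ZMod.natCast_eq_natCast_iff _ _ _).mp heq)
    rw [show 2 * k' - 1 - (2 * k - 1) = 2 * (k' - k) by omega] at hdvd
    have := Nat.eq_zero_of_dvd_of_lt ((Nat.coprime_two_left.mpr hm).symm.dvd_of_dvd_mul_left hdvd)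
      (by omega)
    omega
  refine ⟨hmaps, hinj, surjOn_of_injOn_of_card_le _ hmaps hinj ?_⟩
  have := hm.pos
  rw [card_erase_of_mem (mem_univ _), card_univ, ZMod.card,
    card_erase_of_mem (by simp; omega), Nat.card_Icc]
  omega

lemma prod_abs_sin_mul_two_mul_sub_one (m a : ℕ) (hm : Odd m) (ha : a.Coprime m) :
    ∏ k ∈ (Icc 1 m).erase ((m + 1) / 2), |sin ((a * (2 * k - 1) : ℕ) * π / m)|
      = ∏ k ∈ (Icc 1 m).erase ((m + 1) / 2), |sin ((2 * k - 1 : ℕ) * π / m)| := by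
  have : NeZero m := ⟨hm.pos.ne'⟩
  have hbij := bijOn_two_mul_sub_one m hm
  have hres (c : ℕ) :
      ∏ k ∈ (Icc 1 m).erase ((m + 1) / 2), |sin ((c * (2 * k - 1) : ℕ) * π / m)|
        = ∏ x ∈ univ.erase 0, |sin (((c : ZMod m) * x).val * π / m)| :=
    prod_nbij _ hbij.mapsTo hbij.injOn hbij.surjOn fun k _ => by
      rw [abs_sin_natCast_mul_pi_div m, Nat.cast_mul]
  have hone := hres 1
  simp only [one_mul, Nat.cast_one] at hone
  rw [hres, hone, ← ZMod.coe_unitOfCoprime a ha]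
  exact Units.prod_erase_zero_mul_left (ZMod.unitOfCoprime a ha)
    fun x : ZMod m => |sin ((x.val : ℝ) * π / m)|

lemma IsPrimitiveRoot.prod_one_sub_pow_two_mul_add_one {R : Type*} [CommRing R] [IsDomain R]
    {ζ : R} {N : ℕ} (hN : 0 < N) (hζ : IsPrimitiveRoot ζ (2 * N)) :
    ∏ i ∈ range N, (1 - ζ ^ (2 * i + 1)) = 2 := by
  have hneg : ζ ^ N = -1 := (hζ.pow (by omega) (mul_comm 2 N)).eq_neg_one_of_two_right
  -- `X ^ N + 1 = ∏ i < N, (X - (ζ ^ 2) ^ i * ζ)`, evaluated at `X = 1`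
  have := congrArg (Polynomial.eval 1)
    (X_pow_sub_C_eq_prod (hζ.pow (by omega) rfl) hN hneg)
  simp only [Polynomial.eval_sub, Polynomial.eval_pow, Polynomial.eval_X, Polynomial.eval_C,
    Polynomial.eval_prod, one_pow, sub_neg_eq_add] at this
  rw [one_add_one_eq_two] at this
  refine Eq.trans (prod_congr rfl fun i _ => ?_) this.symm
  rw [← pow_mul, ← pow_succ]

lemma prod_abs_two_mul_sin_odd_mul_pi_div (m : ℕ) (hm : 0 < m) :
    ∏ i ∈ range (2 * m), |2 * sin ((2 * i + 1 : ℕ) * π / (4 * m : ℕ))| = 2 := by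
  have hζ := Complex.isPrimitiveRoot_exp (2 * (2 * m)) (by omega)
  have hpow (j : ℕ) : Complex.exp (2 * π * Complex.I / (2 * (2 * m) : ℕ)) ^ j
      = Complex.exp (Complex.I * ((2 * (j * π / (4 * m : ℕ)) : ℝ))) := by
    rw [← Complex.exp_nat_mul]
    push_cast
    ring_nf
  have := congrArg norm (hζ.prod_one_sub_pow_two_mul_add_one (by omega))
  rw [norm_prod, Complex.norm_ofNat] at this
  refine Eq.trans ?_ this
  refine prod_congr rfl fun i _ => ?_
  rw [norm_sub_rev, hpow, Complex.norm_exp_I_mul_ofReal_sub_one, Real.norm_eq_abs,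
    mul_div_cancel_left₀ _ two_ne_zero]

lemma sq_prod_abs_two_mul_sin_odd_mul_pi_div (m : ℕ) (hm : 0 < m) :
    (∏ i ∈ range m, |2 * sin ((2 * i + 1 : ℕ) * π / (4 * m : ℕ))|) ^ 2 = 2 := by
  have hreflect (i : ℕ) (hi : i ∈ range m) :
      |2 * sin ((2 * (m + (m - 1 - i)) + 1 : ℕ) * π / (4 * m : ℕ))|
        = |2 * sin ((2 * i + 1 : ℕ) * π / (4 * m : ℕ))| := by
    rw [mem_range] at hi
    have hm' : ((4 * m : ℕ) : ℝ) ≠ 0 := by positivity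
    rw [← sin_pi_sub]
    congr 3
    rw [show 2 * (m + (m - 1 - i)) + 1 = 4 * m - (2 * i + 1) by omega, Nat.cast_sub (by omega)]
    field_simp
    ring
  refine Eq.trans ?_ (prod_abs_two_mul_sin_odd_mul_pi_div m hm)
  rw [sq, two_mul, prod_range_add,
    ← prod_range_reflect (fun i => |2 * sin ((2 * (m + i) + 1 : ℕ) * π / (4 * m : ℕ))|),
    prod_congr rfl hreflect]

lemma abs_two_mul_sin_of_cos_two_mul_eq_zero {x : ℝ} (h : cos (2 * x) = 0) :
    |2 * sin x| = √2 := by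
  rw [← sqrt_sq_eq_abs]
  congr 1
  nlinarith [sin_sq_add_cos_sq x, cos_two_mul x]

lemma alphaAng_eq (n k : ℕ) (hn : 1 ≤ n) (hk : 1 ≤ k) :
    alphaAng n k = (2 * k - 1 : ℕ) * π / (2 * (n - 1 : ℕ)) := by
  rw [alphaAng, Nat.cast_sub hn, Nat.cast_sub (by omega)]
  push_cast
  ring

lemma cos_sub_one_mul_alphaAng (n k : ℕ) (hn : 2 ≤ n) :
    cos ((n - 1) * alphaAng n k) = 0 := by
  have hn' : (n : ℝ) - 1 ≠ 0 := by
    have : (2 : ℝ) ≤ n := by exact_mod_cast hn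
    linarith
  rw [cos_eq_zero_iff]
  exact ⟨k - 1, by rw [alphaAng]; field_simp; push_cast; ring⟩

lemma sin_alphaAng_half_ne_zero (n k : ℕ) (hn : 2 ≤ n) (hk : 1 ≤ k) :
    sin (alphaAng n k / 2) ≠ 0 := by
  have : NeZero (4 * (n - 1)) := ⟨by omega⟩
  have hangle : alphaAng n k / 2 = (2 * k - 1 : ℕ) * π / (4 * (n - 1) : ℕ) := by
    rw [alphaAng_eq n k (by omega) hk]; push_cast; ring
  rw [hangle]
  refine sin_natCast_mul_pi_div_ne_zero _ _ fun h => ?_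
  have : 2 ∣ 2 * k - 1 :=
    (Dvd.intro (2 * (n - 1)) (by ring)).trans ((ZMod.natCast_eq_zero_iff _ _).mp h)
  omega

lemma sin_two_mul_alphaAng_ne_zero (n k : ℕ) (hn : Even n)
    (hk : k ∈ (Icc 1 (n - 1)).erase (n / 2)) : sin (2 * alphaAng n k) ≠ 0 := by
  simp only [mem_erase, mem_Icc] at hk
  have : NeZero (n - 1) := ⟨by omega⟩
  have hodd : Odd (n - 1) := by rcases hn with ⟨r, rfl⟩; exact ⟨r - 1, by omega⟩
  have hmem := (bijOn_two_mul_sub_one (n - 1) hodd).mapsTo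
    (show k ∈ ((Icc 1 (n - 1)).erase ((n - 1 + 1) / 2) : Set ℕ) by simp; omega)
  rw [alphaAng_eq n k (by omega) hk.2.1, mul_div_assoc', mul_div_mul_left _ _ two_ne_zero]
  exact sin_natCast_mul_pi_div_ne_zero _ _ (by simpa using hmem)

lemma prod_abs_two_mul_sin_alphaAng_half (n : ℕ) (hn : Even n) (h2 : 2 ≤ n) :
    ∏ k ∈ (Icc 1 (n - 1)).erase (n / 2), |2 * sin (alphaAng n k / 2)| = 1 := by
  have hfull : (∏ k ∈ Icc 1 (n - 1), |2 * sin (alphaAng n k / 2)|) ^ 2 = 2 := by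
    refine Eq.trans ?_ (sq_prod_abs_two_mul_sin_odd_mul_pi_div (n - 1) (by omega))
    rw [← Ico_add_one_right_eq_Icc, prod_Ico_eq_prod_range, Nat.add_sub_cancel]
    congr 1
    refine prod_congr rfl fun i _ => ?_
    rw [alphaAng_eq n _ (by omega) (by omega), show 2 * (1 + i) - 1 = 2 * i + 1 by omega]
    push_cast
    ring_nf
  have hmid : |2 * sin (alphaAng n (n / 2) / 2)| = √2 := by
    refine abs_two_mul_sin_of_cos_two_mul_eq_zero ?_
    have hn' : (n : ℝ) - 1 ≠ 0 := by
      have : (2 : ℝ) ≤ n := by exact_mod_cast h2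
      linarith
    rw [mul_div_cancel₀ _ two_ne_zero, alphaAng, Nat.cast_div_charZero (even_iff_two_dvd.mp hn),
      Nat.cast_ofNat, show (2 * (n / 2 : ℝ) - 1) * π / (2 * (n - 1)) = π / 2 by field_simp,
      cos_pi_div_two]
  rw [← prod_erase_mul _ _ (show n / 2 ∈ Icc 1 (n - 1) by simp; omega), hmid, mul_pow,
    sq_sqrt zero_le_two, mul_eq_right₀ two_ne_zero,
    pow_eq_one_iff_of_nonneg (prod_nonneg fun _ _ => abs_nonneg _) two_ne_zero] at hfull
  exact hfull

lemma prod_abs_sin_div_two_mul_alphaAng (n : ℕ) (h4 : n % 4 = 0) (hn : 0 < n) :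
    ∏ k ∈ (Icc 1 (n - 1)).erase (n / 2), |sin (n / 2 * alphaAng n k)|
      = ∏ k ∈ (Icc 1 (n - 1)).erase (n / 2), |sin (2 * alphaAng n k)| := by
  have hodd : Odd (n - 1) := ⟨2 * (n / 4) - 1, by omega⟩
  have hcop : (n / 4).Coprime (n - 1) :=
    ((Nat.coprime_self_sub_right hn).mpr (Nat.coprime_one_right n)).coprime_dvd_left
      (Nat.div_dvd_of_dvd (Nat.dvd_of_mod_eq_zero h4))
  have h := prod_abs_sin_mul_two_mul_sub_one (n - 1) (n / 4) hodd hcop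
  rw [Nat.sub_add_cancel hn] at h
  convert h using 1 <;> refine prod_congr rfl fun k hk => ?_ <;>
    simp only [mem_erase, mem_Icc] at hk <;> rw [alphaAng_eq n k hn hk.2.1]
  · rw [Nat.cast_mul, Nat.cast_div_charZero (Nat.dvd_of_mod_eq_zero h4)]
    push_cast
    ring_nf
  · ring_nf

lemma one_dotProduct_xiVec_eq (n k : ℕ) (h4 : n % 4 = 0)
    (hk : k ∈ (Icc 1 (n - 1)).erase (n / 2)) :
    (fun _ => (1 : ℝ)) ⬝ᵥ xiVec n k
      = sin ((n - 1) / 2 * alphaAng n k) * sin (n / 2 * alphaAng n k)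
        / (sin (alphaAng n k / 2) * sin (2 * alphaAng n k)) := by
  have hk' := hk
  simp only [mem_erase, mem_Icc] at hk'
  refine eq_div_of_mul_eq (mul_ne_zero (sin_alphaAng_half_ne_zero n k (by omega) hk'.2.1)
    (sin_two_mul_alphaAng_ne_zero n k (Nat.even_iff.mpr (by omega)) hk)) ?_
  rw [mul_comm]
  exact sin_mul_sin_mul_one_dotProduct_xiVec n k h4

lemma abs_one_dotProduct_xiVec (n k : ℕ) (h4 : n % 4 = 0)
    (hk : k ∈ (Icc 1 (n - 1)).erase (n / 2)) :
    |(fun _ => (1 : ℝ)) ⬝ᵥ xiVec n k|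
      = √2 * |sin (n / 2 * alphaAng n k)|
        / (|2 * sin (alphaAng n k / 2)| * |sin (2 * alphaAng n k)|) := by
  have hA : |2 * sin ((n - 1) / 2 * alphaAng n k)| = √2 := by
    refine abs_two_mul_sin_of_cos_two_mul_eq_zero ?_
    rw [← cos_sub_one_mul_alphaAng n k (by simp only [mem_erase, mem_Icc] at hk; omega)]
    ring_nf
  rw [one_dotProduct_xiVec_eq n k h4 hk, ← hA, abs_div, abs_mul, abs_mul, abs_mul 2, abs_mul 2,
    abs_two, mul_assoc, mul_assoc, mul_div_mul_left _ _ two_ne_zero]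

theorem stmt18_general (n : ℕ) (h4 : n % 4 = 0) :
    (∀ k ∈ (Finset.Icc 1 (n - 1)).erase (n / 2),
        (fun _ => (1 : ℝ)) ⬝ᵥ xiVec n k
          = Real.sin (((n : ℝ) - 1) / 2 * alphaAng n k) * Real.sin ((n : ℝ) / 2 * alphaAng n k)
            / (Real.sin (alphaAng n k / 2) * Real.sin (2 * alphaAng n k)))
    ∧ |∏ k ∈ (Finset.Icc 1 (n - 1)).erase (n / 2), (fun _ => (1 : ℝ)) ⬝ᵥ xiVec n k|
        = 2 ^ (n / 2 - 1) := by
  obtain rfl | hn := n.eq_zero_or_pos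
  · simp
  have heven : Even n := Nat.even_iff.mpr (by omega)
  have hcard : #((Icc 1 (n - 1)).erase (n / 2)) = 2 * (n / 2 - 1) := by
    rw [card_erase_of_mem (by simp; omega), Nat.card_Icc]
    omega
  have hD : ∏ k ∈ (Icc 1 (n - 1)).erase (n / 2), |sin (2 * alphaAng n k)| ≠ 0 :=
    prod_ne_zero_iff.mpr fun k hk => abs_ne_zero.mpr (sin_two_mul_alphaAng_ne_zero n k heven hk)
  refine ⟨fun k hk => one_dotProduct_xiVec_eq n k h4 hk, ?_⟩
  rw [abs_prod, prod_congr rfl fun k hk => abs_one_dotProduct_xiVec n k h4 hk,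
    prod_div_distrib, prod_mul_distrib, prod_mul_distrib, prod_const, hcard,
    prod_abs_sin_div_two_mul_alphaAng n h4 hn, prod_abs_two_mul_sin_alphaAng_half n heven (by omega),
    one_mul, mul_div_assoc, div_self hD, mul_one, pow_mul, sq_sqrt zero_le_two]

theorem stmt18 (n : ℕ) (h4 : n % 4 = 0) (h8 : 8 ≤ n) :
    (∀ k ∈ (Finset.Icc 1 (n - 1)).erase (n / 2),
        (fun _ => (1 : ℝ)) ⬝ᵥ xiVec n k
          = Real.sin (((n : ℝ) - 1) / 2 * alphaAng n k) * Real.sin ((n : ℝ) / 2 * alphaAng n k)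
            / (Real.sin (alphaAng n k / 2) * Real.sin (2 * alphaAng n k)))
    ∧ |∏ k ∈ (Finset.Icc 1 (n - 1)).erase (n / 2), (fun _ => (1 : ℝ)) ⬝ᵥ xiVec n k|
        = 2 ^ (n / 2 - 1) :=
  stmt18_general n h4
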